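/- arXiv:2201.02037 — 4 statements merged into one kernel-verified Lean document; each statement's English description precedes it below -/
import Mathlib

section
/- Let f* be a maximum flow in a flow network. Let S_c be the set consisting of the source s together with all vertices W for which there exists a path from s to W that is augmenting for f*. Then S_c is a min-cut. -/
open Finset
open scoped ENNReal

/-- A flow network: a capacity function on ordered pairs of vertices
(capacity `0` meaning "no edge", `⊤` meaning infinite capacity),
together with a source `s` and a sink `t`. -/
structure FlowNetwork (V : Type) where
  cap : V → V → ℝ≥0∞
  s : V
  t : V

variable {V : Type} [Fintype V] [DecidableEq V]

/-- `f` is a flow: nonnegative, below capacity, conservation away from `s`, `t`. -/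
def IsFlow (N : FlowNetwork V) (f : V → V → ℝ) : Prop :=
  (∀ u v, 0 ≤ f u v) ∧
  (∀ u v, ENNReal.ofReal (f u v) ≤ N.cap u v) ∧
  (∀ w, w ≠ N.s → w ≠ N.t → ∑ u, f u w = ∑ u, f w u)

/-- The total (net) flow into the sink. -/
def netFlow (N : FlowNetwork V) (f : V → V → ℝ) : ℝ :=
  ∑ u, f u N.t - ∑ u, f N.t u

/-- A max-flow: a flow of maximal total flow. -/
def IsMaxFlow (N : FlowNetwork V) (f : V → V → ℝ) : Prop :=
  IsFlow N f ∧ ∀ g, IsFlow N g → netFlow N g ≤ netFlow N f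

/-- One step of an augmenting path for `f`: either a forward edge with
residual capacity, or a backward edge carrying positive flow. -/
def AugStep (N : FlowNetwork V) (f : V → V → ℝ) (u v : V) : Prop :=
  ENNReal.ofReal (f u v) < N.cap u v ∨ 0 < f v u

/-- A cut: a set of vertices containing the source but not the sink. -/
def IsCut (N : FlowNetwork V) (S : Finset V) : Prop :=
  N.s ∈ S ∧ N.t ∉ S

/-- The capacity of a cut: sum of capacities of edges leaving it. -/
noncomputable def cutCap (N : FlowNetwork V) (S : Finset V) : ℝ≥0∞ :=
  ∑ u ∈ S, ∑ v ∈ Sᶜ, N.cap u v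

/-- A min-cut: a cut of minimum capacity. -/
def IsMinCut (N : FlowNetwork V) (S : Finset V) : Prop :=
  IsCut N S ∧ ∀ T, IsCut N T → cutCap N S ≤ cutCap N T

open scoped Classical in
/-- The set `S_c` of the source together with all vertices reachable from
the source by paths augmenting for `f`. -/
noncomputable def reachCut (N : FlowNetwork V) (f : V → V → ℝ) : Finset V :=
  Finset.univ.filter (fun W => Relation.ReflTransGen (AugStep N f) N.s W)

/-!
Every flow value is at most every cut capacity, since the net flow across a cut equals the flow
value. Along the edges leaving `S_c` the max-flow is saturated, and along the edges entering it
the flow is zero: otherwise the augmenting paths would extend past `S_c`. So the capacity of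
`S_c` equals the flow value and `S_c` is a min-cut. It is a cut because an augmenting path from
`s` to `t` would allow some small amount `δ > 0` to be pushed along it, increasing the flow.
-/

section

variable {α : Type*} [DecidableEq α]

def addAt (g : α → α → ℝ) (b c : α) (a : ℝ) : α → α → ℝ :=
  fun u v => if u = b ∧ v = c then g u v + a else g u v

lemma abs_addAt_sub_le (g : α → α → ℝ) (b c : α) (a : ℝ) (u v : α) :
    |addAt g b c a u v - g u v| ≤ |a| := by
  unfold addAt; split_ifs <;> simp

end

def excess (f : V → V → ℝ) (w : V) : ℝ := ∑ u, f u w - ∑ u, f w u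

def flowOut (f : V → V → ℝ) (T : Finset V) : ℝ := ∑ u ∈ T, ∑ v ∈ Tᶜ, f u v

def IsFeasible (N : FlowNetwork V) (g : V → V → ℝ) : Prop :=
  (∀ u v, 0 ≤ g u v) ∧ ∀ u v, ENNReal.ofReal (g u v) ≤ N.cap u v

lemma excess_addAt (g : V → V → ℝ) (b c : V) (a : ℝ) (w : V) :
    excess (addAt g b c a) w
      = excess g w + (if w = c then a else 0) - (if w = b then a else 0) := by
  have h (u v : V) : addAt g b c a u v = g u v + if u = b ∧ v = c then a else 0 := by
    unfold addAt; split_ifs <;> simp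
  simp only [excess, h, Finset.sum_add_distrib, ite_and]
  split_ifs <;> simp_all <;> ring

lemma sum_excess_eq_flowOut_compl_sub_flowOut (f : V → V → ℝ) (T : Finset V) :
    ∑ w ∈ T, excess f w = flowOut f Tᶜ - flowOut f T := by
  have split (F : V → V → ℝ) :
      ∑ w ∈ T, ∑ u, F w u = ∑ w ∈ T, ∑ u ∈ T, F w u + ∑ w ∈ T, ∑ u ∈ Tᶜ, F w u := by
    rw [← Finset.sum_add_distrib]
    exact Finset.sum_congr rfl fun w _ => (Finset.sum_add_sum_compl T _).symm
  simp only [excess, flowOut, compl_compl, Finset.sum_sub_distrib]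
  rw [split, split, Finset.sum_comm (s := T) (t := Tᶜ), Finset.sum_comm (s := T) (t := T)]
  ring

lemma flowOut_nonneg {f : V → V → ℝ} (hf : ∀ u v, 0 ≤ f u v) (T : Finset V) :
    0 ≤ flowOut f T :=
  Finset.sum_nonneg fun u _ => Finset.sum_nonneg fun v _ => hf u v

lemma ofReal_flowOut {f : V → V → ℝ} (hf : ∀ u v, 0 ≤ f u v) (T : Finset V) :
    ENNReal.ofReal (flowOut f T) = ∑ u ∈ T, ∑ v ∈ Tᶜ, ENNReal.ofReal (f u v) := by
  rw [flowOut, ENNReal.ofReal_sum_of_nonneg fun u _ => Finset.sum_nonneg fun v _ => hf u v]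
  exact Finset.sum_congr rfl fun u _ => ENNReal.ofReal_sum_of_nonneg fun v _ => hf u v

section

variable {N : FlowNetwork V} {f : V → V → ℝ}

lemma AugStep.exists_push {b c : V} (hf : ∀ u v, 0 ≤ f u v) (h : AugStep N f b c) :
    ∃ r > 0, ∀ g, IsFeasible N g → (∀ u v, |g u v - f u v| ≤ r) → ∀ δ, 0 ≤ δ → δ ≤ r →
      ∃ g', IsFeasible N g' ∧ (∀ u v, |g' u v - g u v| ≤ δ) ∧
        ∀ w, excess g' w = excess g w + (if w = c then δ else 0) - (if w = b then δ else 0) := by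
  rcases h with hfwd | hbwd
  · obtain ⟨x, -, hfx, hxcap⟩ := ENNReal.lt_iff_exists_real_btwn.1 hfwd
    have hfx : f b c < x := (ENNReal.ofReal_lt_ofReal_iff_of_nonneg (hf b c)).1 hfx
    refine ⟨(x - f b c) / 2, by linarith, fun g hg hgf δ hδ hδr => ⟨addAt g b c δ, ⟨?_, ?_⟩,
      fun u v => (abs_addAt_sub_le g b c δ u v).trans (abs_of_nonneg hδ).le, excess_addAt g b c δ⟩⟩
    · intro u v
      unfold addAt; split_ifs
      · linarith [hg.1 u v]
      · exact hg.1 u v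
    · intro u v
      unfold addAt; split_ifs with huv
      · obtain ⟨rfl, rfl⟩ := huv
        have hx : g u v + δ ≤ x := by linarith [(abs_le.1 (hgf u v)).2]
        exact (ENNReal.ofReal_le_ofReal hx).trans hxcap.le
      · exact hg.2 u v
  · refine ⟨f c b / 2, by linarith, fun g hg hgf δ hδ hδr => ⟨addAt g c b (-δ), ⟨?_, ?_⟩,
      fun u v => (abs_addAt_sub_le g c b (-δ) u v).trans (by simp [abs_of_nonneg hδ]), ?_⟩⟩
    · intro u v
      unfold addAt; split_ifs with huv
      · obtain ⟨rfl, rfl⟩ := huv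
        linarith [(abs_le.1 (hgf u v)).1]
      · exact hg.1 u v
    · intro u v
      unfold addAt; split_ifs
      · exact (ENNReal.ofReal_le_ofReal (by linarith)).trans (hg.2 u v)
      · exact hg.2 u v
    · intro w
      rw [excess_addAt]
      split_ifs <;> ring

/-- Augmenting paths need not be simple and capacities may be infinite, so rather than
augmenting by a bottleneck we push a small `δ` step by step, staying within `ε` of `f` so that
each step keeps the room it has for `f`. -/
lemma exists_feasible_shift_of_reflTransGen (hf : IsFeasible N f) {a W : V}
    (h : Relation.ReflTransGen (AugStep N f) a W) {ε : ℝ} (hε : 0 < ε) :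
    ∃ g δ, IsFeasible N g ∧ 0 < δ ∧ δ ≤ ε ∧ (∀ u v, |g u v - f u v| ≤ ε) ∧
      ∀ w, excess g w = excess f w + (if w = W then δ else 0) - (if w = a then δ else 0) := by
  induction h generalizing ε with
  | refl => exact ⟨f, ε, hf, hε, le_rfl, by simp [hε.le], fun w => by ring⟩
  | tail _ hbc ih =>
    obtain ⟨r, hr, push⟩ := hbc.exists_push hf.1
    have hε' : min (ε / 2) r ≤ ε / 2 := min_le_left _ _
    have hr' : min (ε / 2) r ≤ r := min_le_right _ _
    obtain ⟨g, δ, hg, hδ, hδε, hgf, hexg⟩ := ih (ε := min (ε / 2) r) (by positivity)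
    obtain ⟨g', hg', hg'g, hexg'⟩ :=
      push g hg (fun u v => (hgf u v).trans hr') δ hδ.le (hδε.trans hr')
    refine ⟨g', δ, hg', hδ, by linarith, fun u v => ?_, fun w => by rw [hexg', hexg]; ring⟩
    linarith [abs_sub_le (g' u v) (g u v) (f u v), hg'g u v, hgf u v]

lemma IsMaxFlow.not_reflTransGen_augStep (hf : IsMaxFlow N f) (hst : N.s ≠ N.t) :
    ¬ Relation.ReflTransGen (AugStep N f) N.s N.t := by
  intro h
  obtain ⟨g, δ, hg, hδ, -, -, hex⟩ :=
    exists_feasible_shift_of_reflTransGen ⟨hf.1.1, hf.1.2.1⟩ h one_pos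
  have hgflow : IsFlow N g := ⟨hg.1, hg.2, fun w hs ht => sub_eq_zero.1 <| by
    rw [← excess, hex w, if_neg ht, if_neg hs, excess, hf.1.2.2 w hs ht]; ring⟩
  have hval : netFlow N g = netFlow N f + δ := by
    rw [netFlow, ← excess, hex N.t, if_pos rfl, if_neg hst.symm, sub_zero]; rfl
  linarith [hf.2 g hgflow]

lemma IsFlow.netFlow_eq (hf : IsFlow N f) {T : Finset V} (hT : IsCut N T) :
    netFlow N f = flowOut f T - flowOut f Tᶜ := by
  have h : ∑ w ∈ Tᶜ, excess f w = excess f N.t :=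
    Finset.sum_eq_single_of_mem _ (Finset.mem_compl.2 hT.2) fun w hw hwt =>
      sub_eq_zero.2 (hf.2.2 w (fun hws => Finset.mem_compl.1 hw (hws ▸ hT.1)) hwt)
  rw [sum_excess_eq_flowOut_compl_sub_flowOut, compl_compl] at h
  exact h.symm

lemma IsFlow.ofReal_netFlow_le_cutCap (hf : IsFlow N f) {T : Finset V} (hT : IsCut N T) :
    ENNReal.ofReal (netFlow N f) ≤ cutCap N T :=
  calc ENNReal.ofReal (netFlow N f)
      ≤ ENNReal.ofReal (flowOut f T) := ENNReal.ofReal_le_ofReal <| by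
        rw [hf.netFlow_eq hT]; linarith [flowOut_nonneg hf.1 Tᶜ]
    _ = ∑ u ∈ T, ∑ v ∈ Tᶜ, ENNReal.ofReal (f u v) := ofReal_flowOut hf.1 T
    _ ≤ cutCap N T := Finset.sum_le_sum fun u _ => Finset.sum_le_sum fun v _ => hf.2.1 u v

lemma IsFlow.cutCap_eq_ofReal_netFlow (hf : IsFlow N f) {S : Finset V} (hS : IsCut N S)
    (hsat : ∀ u ∈ S, ∀ v ∉ S, ¬ AugStep N f u v) :
    cutCap N S = ENNReal.ofReal (netFlow N f) := by
  have hin : flowOut f Sᶜ = 0 :=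
    Finset.sum_eq_zero fun u hu => Finset.sum_eq_zero fun v hv => le_antisymm
      (not_lt.1 (not_or.1 (hsat v (by simpa using hv) u (Finset.mem_compl.1 hu))).2) (hf.1 u v)
  rw [hf.netFlow_eq hS, hin, sub_zero, ofReal_flowOut hf.1, cutCap]
  exact Finset.sum_congr rfl fun u hu => Finset.sum_congr rfl fun v hv => le_antisymm
    (not_lt.1 (not_or.1 (hsat u hu v (Finset.mem_compl.1 hv))).1) (hf.2.1 u v)

end

/-- for a max-flow `f`, the set `S_c` of the source together with all
vertices reachable from the source by `f`-augmenting paths is a min-cut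
(assuming some cut of finite capacity exists). -/
theorem reachCut_isMinCut (N : FlowNetwork V) (f : V → V → ℝ)
    (hf : IsMaxFlow N f) (hfin : ∃ S, IsCut N S ∧ cutCap N S ≠ ⊤) :
    IsMinCut N (reachCut N f) := by
  obtain ⟨T, hT, -⟩ := hfin
  have hst : N.s ≠ N.t := fun h => hT.2 (h ▸ hT.1)
  have mem_reachCut {w : V} : w ∈ reachCut N f ↔ Relation.ReflTransGen (AugStep N f) N.s w := by
    simp [reachCut]
  have hcut : IsCut N (reachCut N f) :=
    ⟨mem_reachCut.2 .refl, fun h => hf.not_reflTransGen_augStep hst (mem_reachCut.1 h)⟩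
  have hsat : ∀ u ∈ reachCut N f, ∀ v ∉ reachCut N f, ¬ AugStep N f u v :=
    fun u hu v hv huv => hv (mem_reachCut.2 ((mem_reachCut.1 hu).tail huv))
  refine ⟨hcut, fun T hT => ?_⟩
  rw [hf.1.cutCap_eq_ofReal_netFlow hcut hsat]
  exact hf.1.ofReal_netFlow_le_cutCap hT
end

section
/- Let S be a min-cut in the flow network D constructed from the undirected graph H. Then h(S) = {W : (W',W'') crosses out of S} is a minimum cost A–Y separator in H. -/
open Finset
open scoped ENNReal

variable {V : Type} [Fintype V] [DecidableEq V]

/-- `Z` is an `A`–`Y` separator in `H`: disjoint from `{A, Y}` and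
intersecting (the support of) every path between `A` and `Y`. -/
def IsSeparator (H : SimpleGraph V) (A Y : V) (Z : Finset V) : Prop :=
  A ∉ Z ∧ Y ∉ Z ∧ ∀ p : H.Walk A Y, ∃ w ∈ p.support, w ∈ Z

/-- The cost of a set of vertices. -/
noncomputable def sepCost (c : V → ℝ≥0∞) (Z : Finset V) : ℝ≥0∞ := ∑ w ∈ Z, c w

/-- A minimal separator: no proper subset is a separator. -/
def IsMinimalSeparator (H : SimpleGraph V) (A Y : V) (Z : Finset V) : Prop :=
  IsSeparator H A Y Z ∧ ∀ Z' ⊂ Z, ¬ IsSeparator H A Y Z'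

/-- A minimum cost separator. -/
def IsMinCostSeparator (H : SimpleGraph V) (A Y : V) (c : V → ℝ≥0∞) (Z : Finset V) : Prop :=
  IsSeparator H A Y Z ∧ ∀ Z', IsSeparator H A Y Z' → sepCost c Z ≤ sepCost c Z'

/-- The capacity function of the vertex-splitting flow network `D` associated with `H`:
each vertex `W` is split into `W' = Sum.inl W` and `W'' = Sum.inr W`, with an internal
edge `W' → W''` of capacity `c W` (infinite when `W ∈ {A, Y}`), and for each undirected
edge `U − W` of `H`, infinite-capacity external edges `U'' → W'` and `W'' → U'`.
Capacity `0` means "no edge".  The source is `Y'' = Sum.inr Y`, the sink `A' = Sum.inl A`. -/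
noncomputable def splitCap (H : SimpleGraph V) [DecidableRel H.Adj] (c : V → ℝ≥0∞) (A Y : V) :
    V ⊕ V → V ⊕ V → ℝ≥0∞
  | Sum.inl W, Sum.inr X => if W = X then (if W = A ∨ W = Y then ⊤ else c W) else 0
  | Sum.inr U, Sum.inl W => if H.Adj U W then ⊤ else 0
  | _, _ => 0

/-- A cut in `D`: contains the source `Y''` and not the sink `A'`. -/
def IsCutD (A Y : V) (S : Finset (V ⊕ V)) : Prop :=
  Sum.inr Y ∈ S ∧ Sum.inl A ∉ S

/-- The capacity of a cut in `D`. -/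
noncomputable def cutCapD (cap : V ⊕ V → V ⊕ V → ℝ≥0∞) (S : Finset (V ⊕ V)) : ℝ≥0∞ :=
  ∑ u ∈ S, ∑ v ∈ Sᶜ, cap u v

/-- A min-cut in `D`. -/
def IsMinCutD (A Y : V) (cap : V ⊕ V → V ⊕ V → ℝ≥0∞) (S : Finset (V ⊕ V)) : Prop :=
  IsCutD A Y S ∧ ∀ T, IsCutD A Y T → cutCapD cap S ≤ cutCapD cap T

/-- `p` is a directed path from `a` to `b` in the directed graph whose edges are the
pairs of positive capacity. -/
def IsDiPath {α : Type} (cap : α → α → ℝ≥0∞) (p : List α) (a b : α) : Prop :=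
  p.Chain' (fun u v => cap u v ≠ 0) ∧ p.head? = some a ∧ p.getLast? = some b

/-- The map `𝔡`: the set formed by `Y''` and all vertices of `D` lying on some directed
path from `Y''` to `W'` for some `W ∈ Z` that does not intersect `U'` or `U''` for any
other `U ∈ Z`. -/
noncomputable def dMap (H : SimpleGraph V) [DecidableRel H.Adj] (c : V → ℝ≥0∞) (A Y : V)
    (Z : Finset V) : Finset (V ⊕ V) :=
  @Finset.filter (V ⊕ V)
    (fun x => x = Sum.inr Y ∨
      ∃ W ∈ Z, ∃ p : List (V ⊕ V), IsDiPath (splitCap H c A Y) p (Sum.inr Y) (Sum.inl W) ∧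
        x ∈ p ∧ ∀ U ∈ Z, U ≠ W → Sum.inl U ∉ p ∧ Sum.inr U ∉ p)
    (fun _ => Classical.propDecidable _) Finset.univ

/-- The map `𝔥`: the set of vertices `W` of `H` whose internal edge `(W', W'')`
crosses from `S` to its complement. -/
def hMap (S : Finset (V ⊕ V)) : Finset V :=
  Finset.univ.filter (fun W => Sum.inl W ∈ S ∧ Sum.inr W ∉ S)

/-- The relation `Z₁ ⊴ Z₂`: `Y` is separated from `Z₂ \ Z₁` by `Z₁`, and
`A` is separated from `Z₁ \ Z₂` by `Z₂`, in `H`. -/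
def SepOrder (H : SimpleGraph V) (A Y : V) (Z₁ Z₂ : Finset V) : Prop :=
  (∀ W ∈ Z₂ \ Z₁, ∀ p : H.Walk Y W, ∃ u ∈ p.support, u ∈ Z₁) ∧
  (∀ W ∈ Z₁ \ Z₂, ∀ p : H.Walk A W, ∃ u ∈ p.support, u ∈ Z₂)

/-!
A cut `S` of finite capacity is crossed by no infinite external edge `U'' → W'`. Hence a walk
from `Y` avoiding `𝔥(S)` stays inside `S`, entering each vertex `W` at `W'` and leaving it at
`W''`, and never reaches the sink `A'`; so `𝔥(S)` is a separator; its cost is at most the capacity of `S`, its internal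
edges being among the crossing ones. Conversely, a separator `Z` gives the cut formed by both
copies of the vertices reachable from `Y` avoiding `Z`, together with `W'` for `W ∈ Z`: only
the internal edges of `Z` cross it, so its capacity is `c(Z)`, and minimality of `S` yields
`c(𝔥(S)) ≤ c(Z)`.
-/

open SimpleGraph

@[simp]
lemma mem_hMap {S : Finset (V ⊕ V)} {W : V} :
    W ∈ hMap S ↔ Sum.inl W ∈ S ∧ Sum.inr W ∉ S := by
  simp [hMap]

lemma IsSeparator.ne {H : SimpleGraph V} {A Y : V} {Z : Finset V}
    (hZ : IsSeparator H A Y Z) : A ≠ Y := by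
  rintro rfl
  obtain ⟨w, hw, hwZ⟩ := hZ.2.2 Walk.nil
  rw [Walk.support_nil, List.mem_singleton] at hw
  exact hZ.1 (hw ▸ hwZ)

lemma sepCost_ne_top {c : V → ℝ≥0∞} (hc : ∀ w, c w ≠ ⊤) (Z : Finset V) : sepCost c Z ≠ ⊤ :=
  ENNReal.sum_ne_top.2 fun w _ => hc w

lemma cutCapD_eq_sum_product (cap : V ⊕ V → V ⊕ V → ℝ≥0∞) (S : Finset (V ⊕ V)) :
    cutCapD cap S = ∑ p ∈ S ×ˢ Sᶜ, cap p.1 p.2 :=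
  (sum_product' S Sᶜ cap).symm

lemma mem_of_cutCapD_ne_top {cap : V ⊕ V → V ⊕ V → ℝ≥0∞} {S : Finset (V ⊕ V)}
    (hfin : cutCapD cap S ≠ ⊤) {u v : V ⊕ V} (hu : u ∈ S) (huv : cap u v = ⊤) : v ∈ S := by
  by_contra hv
  rw [cutCapD, ENNReal.sum_ne_top] at hfin
  exact ENNReal.sum_ne_top.1 (hfin u hu) v (mem_compl.2 hv) huv

/-- No external edge `U'' → W'` of the split network of `H` leaves `S`. -/
def IsAdjClosed (H : SimpleGraph V) (S : Finset (V ⊕ V)) : Prop :=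
  ∀ ⦃U W : V⦄, H.Adj U W → Sum.inr U ∈ S → Sum.inl W ∈ S

section Separation

variable {H : SimpleGraph V} {S : Finset (V ⊕ V)}

lemma IsAdjClosed.inl_mem_of_walk (hS : IsAdjClosed H S) {u v : V}
    (q : H.Walk u v) (hu : Sum.inl u ∈ S) (hq : ∀ w ∈ q.support, w ∉ hMap S) :
    Sum.inl v ∈ S := by
  induction q with
  | nil => exact hu
  | cons hadj q ih =>
    rw [Walk.support_cons, List.forall_mem_cons, mem_hMap, not_and_not_right] at hq
    exact ih (hS hadj (hq.1 hu)) hq.2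

lemma isSeparator_hMap {A Y : V} (hAY : A ≠ Y) (hcut : IsCutD A Y S) (hS : IsAdjClosed H S) :
    IsSeparator H A Y (hMap S) := by
  refine ⟨fun hA => hcut.2 (mem_hMap.1 hA).1, fun hY => (mem_hMap.1 hY).2 hcut.1, fun p => ?_⟩
  by_contra! hp
  obtain ⟨v, hadj, q, hq⟩ := p.reverse.exists_eq_cons_of_ne hAY.symm
  have hsupp : ∀ w ∈ (Walk.cons hadj q).support, w ∉ hMap S := by
    rw [← hq, Walk.support_reverse]
    exact fun w hw => hp w (List.mem_reverse.1 hw)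
  rw [Walk.support_cons, List.forall_mem_cons] at hsupp
  exact hcut.2 (hS.inl_mem_of_walk q (hS hadj hcut.1) hsupp.2)

end Separation

def internalEdges (Z : Finset V) : Finset ((V ⊕ V) × (V ⊕ V)) :=
  Z.map ⟨fun W => (Sum.inl W, Sum.inr W), fun _ _ h => Sum.inl_injective (congrArg Prod.fst h)⟩

lemma internalEdges_hMap_subset (S : Finset (V ⊕ V)) : internalEdges (hMap S) ⊆ S ×ˢ Sᶜ := by
  intro p hp
  obtain ⟨W, hW, rfl⟩ := mem_map.1 hp
  exact mem_product.2 ⟨(mem_hMap.1 hW).1, mem_compl.2 (mem_hMap.1 hW).2⟩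

section SplitNetwork

variable (H : SimpleGraph V) [DecidableRel H.Adj] (c : V → ℝ≥0∞) (A Y : V)
  {S : Finset (V ⊕ V)}

lemma isAdjClosed_of_cutCapD_ne_top (hfin : cutCapD (splitCap H c A Y) S ≠ ⊤) :
    IsAdjClosed H S :=
  fun _ _ hadj hU => mem_of_cutCapD_ne_top hfin hU (by simp [splitCap, hadj])

lemma sum_internalEdges_hMap (hcut : IsCutD A Y S) :
    ∑ p ∈ internalEdges (hMap S), splitCap H c A Y p.1 p.2 = sepCost c (hMap S) := by
  rw [internalEdges, sum_map, sepCost]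
  refine sum_congr rfl fun W hW => ?_
  obtain ⟨hWS, hWS'⟩ := mem_hMap.1 hW
  have hWA : W ≠ A := by rintro rfl; exact hcut.2 hWS
  have hWY : W ≠ Y := by rintro rfl; exact hWS' hcut.1
  show splitCap H c A Y (Sum.inl W) (Sum.inr W) = c W
  simp [splitCap, hWA, hWY]

lemma sepCost_hMap_le_cutCapD (hcut : IsCutD A Y S) :
    sepCost c (hMap S) ≤ cutCapD (splitCap H c A Y) S := by
  rw [← sum_internalEdges_hMap H c A Y hcut, cutCapD_eq_sum_product]
  exact sum_le_sum_of_subset (internalEdges_hMap_subset S)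

lemma cutCapD_eq_sepCost_hMap (hcut : IsCutD A Y S) (hS : IsAdjClosed H S) :
    cutCapD (splitCap H c A Y) S = sepCost c (hMap S) := by
  rw [← sum_internalEdges_hMap H c A Y hcut, cutCapD_eq_sum_product]
  refine (sum_subset (internalEdges_hMap_subset S) fun p hp hpi => ?_).symm
  obtain ⟨u, v⟩ := p
  rw [mem_product, mem_compl] at hp
  rcases u with U | U <;> rcases v with W | W
  · rfl
  · have hUW : U ≠ W := by
      rintro rfl
      exact hpi (mem_map_of_mem _ (mem_hMap.2 hp))
    simp [splitCap, hUW]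
  · have hUW : ¬ H.Adj U W := fun hadj => hp.2 (hS hadj hp.1)
    simp [splitCap, hUW]
  · rfl

end SplitNetwork

section SeparatorCut

variable {H : SimpleGraph V} {A Y : V} {Z : Finset V}

def ReachableAvoiding (H : SimpleGraph V) (Y : V) (Z : Finset V) (U : V) : Prop :=
  ∃ p : H.Walk Y U, ∀ w ∈ p.support, w ∉ Z

open Classical in
noncomputable def separatorCut (H : SimpleGraph V) (Y : V) (Z : Finset V) : Finset (V ⊕ V) :=
  univ.filter (Sum.elim (fun W => W ∈ Z ∨ ReachableAvoiding H Y Z W) (ReachableAvoiding H Y Z))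

@[simp]
lemma inl_mem_separatorCut {W : V} :
    Sum.inl W ∈ separatorCut H Y Z ↔ W ∈ Z ∨ ReachableAvoiding H Y Z W := by
  simp [separatorCut]

@[simp]
lemma inr_mem_separatorCut {W : V} :
    Sum.inr W ∈ separatorCut H Y Z ↔ ReachableAvoiding H Y Z W := by
  simp [separatorCut]

lemma ReachableAvoiding.notMem {W : V} (h : ReachableAvoiding H Y Z W) : W ∉ Z :=
  h.elim fun p hp => hp W p.end_mem_support

lemma hMap_separatorCut : hMap (separatorCut H Y Z) = Z := by
  ext W
  simp only [mem_hMap, inl_mem_separatorCut, inr_mem_separatorCut]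
  exact ⟨fun h => h.1.resolve_right h.2, fun hW => ⟨Or.inl hW, fun h => h.notMem hW⟩⟩

lemma isCutD_separatorCut (hZ : IsSeparator H A Y Z) : IsCutD A Y (separatorCut H Y Z) := by
  refine ⟨inr_mem_separatorCut.2 ⟨Walk.nil, by simpa using hZ.2.1⟩, fun hA => ?_⟩
  rcases inl_mem_separatorCut.1 hA with hA | ⟨p, hp⟩
  · exact hZ.1 hA
  · obtain ⟨w, hw, hwZ⟩ := hZ.2.2 p.reverse
    rw [Walk.support_reverse, List.mem_reverse] at hw
    exact hp w hw hwZ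

lemma isAdjClosed_separatorCut : IsAdjClosed H (separatorCut H Y Z) := by
  intro U W hadj hU
  rw [inr_mem_separatorCut] at hU
  rw [inl_mem_separatorCut, or_iff_not_imp_left]
  intro hW
  obtain ⟨p, hp⟩ := hU
  refine ⟨p.concat hadj, fun w hw => ?_⟩
  rw [Walk.support_concat, List.mem_append, List.mem_singleton] at hw
  rcases hw with hw | rfl
  exacts [hp w hw, hW]

lemma cutCapD_separatorCut [DecidableRel H.Adj] (c : V → ℝ≥0∞) (hZ : IsSeparator H A Y Z) :
    cutCapD (splitCap H c A Y) (separatorCut H Y Z) = sepCost c Z := by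
  rw [cutCapD_eq_sepCost_hMap H c A Y (isCutD_separatorCut hZ) isAdjClosed_separatorCut,
    hMap_separatorCut]

end SeparatorCut

theorem hMap_isMinCostSeparator_general (H : SimpleGraph V) [DecidableRel H.Adj]
    (A Y : V) (c : V → ℝ≥0∞) (hcfin : ∀ w, c w ≠ ⊤)
    (hsep : ∃ Z, IsSeparator H A Y Z)
    (S : Finset (V ⊕ V)) (hS : IsMinCutD A Y (splitCap H c A Y) S) :
    IsMinCostSeparator H A Y c (hMap S) := by
  obtain ⟨Z₀, hZ₀⟩ := hsep
  have hle : ∀ Z, IsSeparator H A Y Z → cutCapD (splitCap H c A Y) S ≤ sepCost c Z :=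
    fun Z hZ => cutCapD_separatorCut c hZ ▸ hS.2 _ (isCutD_separatorCut hZ)
  have hfin : cutCapD (splitCap H c A Y) S ≠ ⊤ :=
    ne_top_of_le_ne_top (sepCost_ne_top hcfin Z₀) (hle Z₀ hZ₀)
  refine ⟨isSeparator_hMap hZ₀.ne hS.1 (isAdjClosed_of_cutCapD_ne_top H c A Y hfin),
    fun Z hZ => ?_⟩
  exact (sepCost_hMap_le_cutCapD H c A Y hS.1).trans (hle Z hZ)

/-- if `S` is a min-cut in `D`, then `𝔥(S)` is a minimum cost
`A`–`Y` separator in `H`. -/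
theorem hMap_isMinCostSeparator (H : SimpleGraph V) [DecidableRel H.Adj]
    (A Y : V) (c : V → ℝ≥0∞) (hcpos : ∀ w, 0 < c w) (hcfin : ∀ w, c w ≠ ⊤)
    (hsep : ∃ Z, IsSeparator H A Y Z)
    (S : Finset (V ⊕ V)) (hS : IsMinCutD A Y (splitCap H c A Y) S) :
    IsMinCostSeparator H A Y c (hMap S) :=
  hMap_isMinCostSeparator_general H A Y c hcfin hsep S hS
end

section
/- Let D be a flow network in which every edge crossing from a min-cut S to its complement is an internal edge of the form (W',W''). If S and S' are min-cuts with S ⊆ S', then for any vertex W with W' ∈ S' and W'' ∉ S' but not (W' ∈ S and W'' ∉ S), and any directed path from the source Y'' to W' in D alternating external (infinite capacity) and internal edges, the path must contain an internal edge crossing out of S. -/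
open Finset
open scoped ENNReal

variable {V : Type} [Fintype V] [DecidableEq V]

theorem List.IsChain.exists_step_leaving {α : Type} {R : α → α → Prop} (P : α → Prop) :
    ∀ {p : List α} {a b : α}, p.IsChain R → p.head? = some a → p.getLast? = some b →
      P a → ¬ P b → ∃ u v, P u ∧ ¬ P v ∧ R u v ∧ (u, v) ∈ p.zip p.tail
  | [], _, _, _, ha, _, _, _ => by simp at ha
  | [x], a, b, _, ha, hb, hPa, hPb => by
    simp only [List.head?_cons, List.getLast?_singleton, Option.some.injEq] at ha hb
    exact absurd (hb ▸ ha ▸ hPa) hPb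
  | x :: y :: l, a, b, hp, ha, hb, hPa, hPb => by
    simp only [List.head?_cons, Option.some.injEq] at ha
    subst ha
    rw [List.isChain_cons_cons] at hp
    by_cases hPy : P y
    · obtain ⟨u, v, hu, hv, huv, hmem⟩ :=
        List.IsChain.exists_step_leaving P hp.2 rfl (List.getLast?_cons_cons ▸ hb) hPy hPb
      exact ⟨u, v, hu, hv, huv, List.mem_cons_of_mem _ hmem⟩
    · exact ⟨x, y, hPa, hPy, hp.1, by simp⟩

theorem path_crosses_smaller_minCut_general (H : SimpleGraph V) [DecidableRel H.Adj]
    (A Y : V) (c : V → ℝ≥0∞)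
    (hint : ∀ T, IsMinCutD A Y (splitCap H c A Y) T →
      ∀ u ∈ T, ∀ v ∈ Tᶜ, splitCap H c A Y u v ≠ 0 →
        ∃ W : V, u = Sum.inl W ∧ v = Sum.inr W)
    (S S' : Finset (V ⊕ V))
    (hS : IsMinCutD A Y (splitCap H c A Y) S)
    (hsub : S ⊆ S') (W : V)
    (hW'' : Sum.inr W ∉ S')
    (hnot : ¬ (Sum.inl W ∈ S ∧ Sum.inr W ∉ S))
    (p : List (V ⊕ V)) (hp : IsDiPath (splitCap H c A Y) p (Sum.inr Y) (Sum.inl W)) :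
    ∃ U : V, Sum.inl U ∈ S ∧ Sum.inr U ∉ S ∧
      (Sum.inl U, Sum.inr U) ∈ p.zip p.tail := by
  have hWS : Sum.inl W ∉ S := fun hW => hnot ⟨hW, fun hW₂ => hW'' (hsub hW₂)⟩
  obtain ⟨u, v, hu, hv, huv, hmem⟩ :=
    List.IsChain.exists_step_leaving (· ∈ S) hp.1 hp.2.1 hp.2.2 hS.1.1 hWS
  obtain ⟨U, rfl, rfl⟩ := hint S hS u hu v (mem_compl.2 hv) huv
  exact ⟨U, hu, hv, hmem⟩

/-- suppose every edge crossing out of a min-cut of `D` is internal.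
If `S ⊆ S'` are min-cuts, `W` satisfies `W' ∈ S'`, `W'' ∉ S'` but not
(`W' ∈ S` and `W'' ∉ S`), then any directed path in `D` from the source `Y''` to `W'`
contains an internal edge crossing out of `S`. -/
theorem path_crosses_smaller_minCut (H : SimpleGraph V) [DecidableRel H.Adj]
    (A Y : V) (c : V → ℝ≥0∞) (hcpos : ∀ w, 0 < c w) (hcfin : ∀ w, c w ≠ ⊤)
    (hint : ∀ T, IsMinCutD A Y (splitCap H c A Y) T →
      ∀ u ∈ T, ∀ v ∈ Tᶜ, splitCap H c A Y u v ≠ 0 →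
        ∃ W : V, u = Sum.inl W ∧ v = Sum.inr W)
    (S S' : Finset (V ⊕ V))
    (hS : IsMinCutD A Y (splitCap H c A Y) S)
    (hS' : IsMinCutD A Y (splitCap H c A Y) S')
    (hsub : S ⊆ S') (W : V)
    (hW' : Sum.inl W ∈ S') (hW'' : Sum.inr W ∉ S')
    (hnot : ¬ (Sum.inl W ∈ S ∧ Sum.inr W ∉ S))
    (p : List (V ⊕ V)) (hp : IsDiPath (splitCap H c A Y) p (Sum.inr Y) (Sum.inl W)) :
    ∃ U : V, Sum.inl U ∈ S ∧ Sum.inr U ∉ S ∧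
      (Sum.inl U, Sum.inr U) ∈ p.zip p.tail :=
  path_crosses_smaller_minCut_general H A Y c hint S S' hS hsub W hW'' hnot p hp
end

section
/- Let H be a finite undirected graph with distinguished vertices A, Y, positive vertex costs, in which A and Y are non-adjacent and at least one A–Y separator exists. Then there exists a minimum cost A–Y separator O such that for every minimum cost A–Y separator Z, every path in H from Y to a vertex of Z∖O intersects O, and every path in H from A to a vertex of O∖Z intersects Z. -/
open Finset
open scoped ENNReal

variable {V : Type} [Fintype V] [DecidableEq V]

/-!
For a separator `Z`, let `R(Z)` be the set of vertices reachable from `Y` without meeting `Z`;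
its vertex boundary is a separator contained in `Z`. Vertex-boundary cost is submodular
(`∂(S ∩ T) ∪ ∂(S ∪ T) ⊆ ∂S ∪ ∂T` and `∂(S ∩ T) ∩ ∂(S ∪ T) ⊆ ∂S ∩ ∂T`), so the sets
`S ∋ Y`, `A ∉ S` whose boundary is a minimum cost separator ("tight sides", the analogues of
the min-cuts of `splitCap`) are closed under intersection. The least tight side `S` plays the
role of the minimal min-cut, and `O = ∂S` works: for every minimum cost `Z` we have
`S ⊆ R(Z)`, which gives both halves of `O ⊴ Z`.
-/

lemma InfClosed.exists_isLeast {α : Type*} [SemilatticeInf α] {s : Set α} (hs : InfClosed s)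
    (hfin : s.Finite) (hne : s.Nonempty) : ∃ a, IsLeast s a := by
  have hne' : hfin.toFinset.Nonempty := by simpa using hne
  exact ⟨hfin.toFinset.inf' hne' id, hs.finsetInf'_mem hne' fun _ h => by simpa using h,
    fun _ h => Finset.inf'_le id (by simpa using h)⟩

lemma ENNReal.le_of_add_le_add_of_le {a b m : ℝ≥0∞} (h : a + b ≤ m + m) (hb : m ≤ b) :
    a ≤ m := by
  rcases eq_or_ne m ⊤ with rfl | hm
  · exact le_top
  · exact (ENNReal.add_le_add_iff_right hm).1 ((add_le_add_right hb a).trans h)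

omit [Fintype V] [DecidableEq V] in
lemma sepCost_mono {c : V → ℝ≥0∞} {X X' : Finset V} (h : X ⊆ X') :
    sepCost c X ≤ sepCost c X' :=
  sum_le_sum_of_subset h

omit [Fintype V] in
lemma sepCost_add_le_of_subset {c : V → ℝ≥0∞} {X X' W W' : Finset V}
    (hunion : X ∪ X' ⊆ W ∪ W') (hinter : X ∩ X' ⊆ W ∩ W') :
    sepCost c X + sepCost c X' ≤ sepCost c W + sepCost c W' := by
  rw [sepCost, sepCost, sepCost, sepCost, ← sum_union_inter, ← sum_union_inter (s₁ := W)]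
  exact add_le_add (sum_le_sum_of_subset hunion) (sum_le_sum_of_subset hinter)

namespace SimpleGraph

variable {H : SimpleGraph V} {Y : V} {S T Z : Finset V}

section Reachability

omit [DecidableEq V]

open Classical in
noncomputable def reachableAvoiding (H : SimpleGraph V) (Y : V) (Z : Finset V) : Finset V :=
  univ.filter fun v => ∃ p : H.Walk Y v, ∀ u ∈ p.support, u ∉ Z

@[simp]
lemma mem_reachableAvoiding {v : V} :
    v ∈ H.reachableAvoiding Y Z ↔ ∃ p : H.Walk Y v, ∀ u ∈ p.support, u ∉ Z := by
  simp [reachableAvoiding]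

lemma notMem_reachableAvoiding_of_mem {v : V} (hv : v ∈ Z) : v ∉ H.reachableAvoiding Y Z :=
  fun h => (mem_reachableAvoiding.1 h).elim fun p hp => hp v p.end_mem_support hv

lemma mem_reachableAvoiding_of_walk {v w : V} (hv : v ∈ H.reachableAvoiding Y Z)
    (p : H.Walk v w) (hp : ∀ u ∈ p.support, u ∉ Z) : w ∈ H.reachableAvoiding Y Z := by
  obtain ⟨q, hq⟩ := mem_reachableAvoiding.1 hv
  exact mem_reachableAvoiding.2
    ⟨q.append p, fun u hu => ((Walk.mem_support_append_iff q p).1 hu).elim (hq u) (hp u)⟩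

lemma mem_reachableAvoiding_of_adj {u v : V} (hu : u ∈ H.reachableAvoiding Y Z) (huv : H.Adj u v)
    (hv : v ∉ Z) : v ∈ H.reachableAvoiding Y Z := by
  have hu' : u ∉ Z := fun h => notMem_reachableAvoiding_of_mem h hu
  exact mem_reachableAvoiding_of_walk hu huv.toWalk (by simp [hu', hv])

end Reachability

open Classical in
noncomputable def vertexBoundary (H : SimpleGraph V) (S : Finset V) : Finset V :=
  univ.filter fun v => v ∉ S ∧ ∃ u ∈ S, H.Adj u v

@[simp]
lemma mem_vertexBoundary {v : V} : v ∈ H.vertexBoundary S ↔ v ∉ S ∧ ∃ u ∈ S, H.Adj u v := by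
  simp [vertexBoundary]

lemma mem_of_walk_avoiding_vertexBoundary {x y : V} (p : H.Walk x y) (hx : x ∈ S)
    (hp : ∀ u ∈ p.support, u ∉ H.vertexBoundary S) : y ∈ S := by
  induction p with
  | nil => exact hx
  | @cons a b _ hab q ih =>
    have hb : b ∈ S := by
      by_contra hb
      exact hp b (by simp) (mem_vertexBoundary.2 ⟨hb, a, hx, hab⟩)
    exact ih hb fun u hu => hp u (List.mem_cons_of_mem _ hu)

lemma vertexBoundary_inter_subset :
    H.vertexBoundary (S ∩ T) ⊆ H.vertexBoundary S ∪ H.vertexBoundary T := by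
  intro v hv
  obtain ⟨hv, u, hu, huv⟩ := mem_vertexBoundary.1 hv
  rw [mem_inter] at hu
  by_cases hvS : v ∈ S
  · exact mem_union_right _ (mem_vertexBoundary.2 ⟨fun hvT => hv (mem_inter.2 ⟨hvS, hvT⟩),
      u, hu.2, huv⟩)
  · exact mem_union_left _ (mem_vertexBoundary.2 ⟨hvS, u, hu.1, huv⟩)

lemma vertexBoundary_union_subset :
    H.vertexBoundary (S ∪ T) ⊆ H.vertexBoundary S ∪ H.vertexBoundary T := by
  intro v hv
  obtain ⟨hv, u, hu, huv⟩ := mem_vertexBoundary.1 hv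
  rw [mem_union, not_or] at hv
  rcases mem_union.1 hu with hu | hu
  · exact mem_union_left _ (mem_vertexBoundary.2 ⟨hv.1, u, hu, huv⟩)
  · exact mem_union_right _ (mem_vertexBoundary.2 ⟨hv.2, u, hu, huv⟩)

lemma vertexBoundary_inter_inter_vertexBoundary_union_subset :
    H.vertexBoundary (S ∩ T) ∩ H.vertexBoundary (S ∪ T) ⊆
      H.vertexBoundary S ∩ H.vertexBoundary T := by
  intro v hv
  rw [mem_inter, mem_vertexBoundary, mem_vertexBoundary, mem_union, not_or] at hv
  obtain ⟨⟨-, u, hu, huv⟩, ⟨hvS, hvT⟩, -⟩ := hv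
  exact mem_inter.2 ⟨mem_vertexBoundary.2 ⟨hvS, u, (mem_inter.1 hu).1, huv⟩,
    mem_vertexBoundary.2 ⟨hvT, u, (mem_inter.1 hu).2, huv⟩⟩

lemma vertexBoundary_reachableAvoiding_subset : H.vertexBoundary (H.reachableAvoiding Y Z) ⊆ Z :=
  fun v hv => by
    obtain ⟨hv, u, hu, huv⟩ := mem_vertexBoundary.1 hv
    by_contra hvZ
    exact hv (mem_reachableAvoiding_of_adj hu huv hvZ)

end SimpleGraph

open SimpleGraph

section Separators

variable {H : SimpleGraph V} {A Y : V} {c : V → ℝ≥0∞} {S T Z : Finset V}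

section

omit [DecidableEq V]

lemma exists_isMinCostSeparator {H : SimpleGraph V} {A Y : V} (c : V → ℝ≥0∞)
    (h : ∃ Z, IsSeparator H A Y Z) : ∃ Z, IsMinCostSeparator H A Y c Z := by
  classical
  obtain ⟨Z₁, hZ₁⟩ := h
  obtain ⟨Z, hZ, hmin⟩ :=
    (univ.filter (IsSeparator H A Y)).exists_min_image (sepCost c) ⟨Z₁, by simpa using hZ₁⟩
  exact ⟨Z, (mem_filter.1 hZ).2, fun Z' hZ' => hmin Z' (by simpa using hZ')⟩

lemma IsSeparator.start_mem_reachableAvoiding (hZ : IsSeparator H A Y Z) :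
    Y ∈ H.reachableAvoiding Y Z :=
  mem_reachableAvoiding.2 ⟨Walk.nil, by simpa using hZ.2.1⟩

lemma IsSeparator.notMem_reachableAvoiding (hZ : IsSeparator H A Y Z) :
    A ∉ H.reachableAvoiding Y Z := fun hA => by
  obtain ⟨p, hp⟩ := mem_reachableAvoiding.1 hA
  obtain ⟨w, hw, hwZ⟩ := hZ.2.2 p.reverse
  exact hp w (by simpa using hw) hwZ

end

lemma isSeparator_vertexBoundary (hY : Y ∈ S) (hA : A ∉ S) (hAS : A ∉ H.vertexBoundary S) :
    IsSeparator H A Y (H.vertexBoundary S) := by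
  refine ⟨hAS, fun h => (mem_vertexBoundary.1 h).1 hY, fun p => ?_⟩
  by_contra! hp
  exact hA (mem_of_walk_avoiding_vertexBoundary p.reverse hY (by simpa using hp))

lemma sepCost_vertexBoundary_inter_add_union_le :
    sepCost c (H.vertexBoundary (S ∩ T)) + sepCost c (H.vertexBoundary (S ∪ T)) ≤
      sepCost c (H.vertexBoundary S) + sepCost c (H.vertexBoundary T) :=
  sepCost_add_le_of_subset (union_subset vertexBoundary_inter_subset vertexBoundary_union_subset)
    vertexBoundary_inter_inter_vertexBoundary_union_subset

def IsTightSide (H : SimpleGraph V) (A Y : V) (c : V → ℝ≥0∞) (S : Finset V) : Prop :=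
  Y ∈ S ∧ A ∉ S ∧ IsMinCostSeparator H A Y c (H.vertexBoundary S)

lemma IsTightSide.inter (hS : IsTightSide H A Y c S) (hT : IsTightSide H A Y c T) :
    IsTightSide H A Y c (S ∩ T) := by
  obtain ⟨hYS, hAS, hSmin⟩ := hS
  obtain ⟨hYT, hAT, hTmin⟩ := hT
  have hA_bdry {X : Finset V} (hX : H.vertexBoundary X ⊆ H.vertexBoundary S ∪ H.vertexBoundary T) :
      A ∉ H.vertexBoundary X := fun h => (mem_union.1 (hX h)).elim hSmin.1.1 hTmin.1.1
  have hsep_inter : IsSeparator H A Y (H.vertexBoundary (S ∩ T)) :=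
    isSeparator_vertexBoundary (mem_inter.2 ⟨hYS, hYT⟩) (fun h => hAS (mem_inter.1 h).1)
      (hA_bdry vertexBoundary_inter_subset)
  have hsep_union : IsSeparator H A Y (H.vertexBoundary (S ∪ T)) :=
    isSeparator_vertexBoundary (mem_union_left _ hYS)
      (fun h => (mem_union.1 h).elim hAS hAT) (hA_bdry vertexBoundary_union_subset)
  have hle : sepCost c (H.vertexBoundary (S ∩ T)) ≤ sepCost c (H.vertexBoundary S) := by
    refine ENNReal.le_of_add_le_add_of_le ?_ (hSmin.2 _ hsep_union)
    calc _ ≤ sepCost c (H.vertexBoundary S) + sepCost c (H.vertexBoundary T) :=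
          sepCost_vertexBoundary_inter_add_union_le
      _ ≤ _ := add_le_add_right (hTmin.2 _ hSmin.1) _
  exact ⟨mem_inter.2 ⟨hYS, hYT⟩, fun h => hAS (mem_inter.1 h).1, hsep_inter,
    fun Z hZ => hle.trans (hSmin.2 Z hZ)⟩

lemma IsMinCostSeparator.isTightSide_reachableAvoiding (hZ : IsMinCostSeparator H A Y c Z) :
    IsTightSide H A Y c (H.reachableAvoiding Y Z) := by
  have hsub : H.vertexBoundary (H.reachableAvoiding Y Z) ⊆ Z :=
    vertexBoundary_reachableAvoiding_subset
  refine ⟨hZ.1.start_mem_reachableAvoiding, hZ.1.notMem_reachableAvoiding, ?_,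
    fun Z' hZ' => (sepCost_mono hsub).trans (hZ.2 Z' hZ')⟩
  exact isSeparator_vertexBoundary hZ.1.start_mem_reachableAvoiding
    hZ.1.notMem_reachableAvoiding fun h => hZ.1.1 (hsub h)

lemma sepOrder_vertexBoundary (hY : Y ∈ S) (hZ : IsSeparator H A Y Z)
    (hSZ : S ⊆ H.reachableAvoiding Y Z) : SepOrder H A Y (H.vertexBoundary S) Z := by
  constructor
  · intro W hW p
    by_contra! hp
    exact notMem_reachableAvoiding_of_mem (mem_sdiff.1 hW).1
      (hSZ (mem_of_walk_avoiding_vertexBoundary p hY hp))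
  · intro W hW p
    by_contra! hp
    obtain ⟨hWO, hWZ⟩ := mem_sdiff.1 hW
    obtain ⟨-, u, hu, huW⟩ := mem_vertexBoundary.1 hWO
    have hWR := mem_reachableAvoiding_of_adj (hSZ hu) huW hWZ
    exact hZ.notMem_reachableAvoiding
      (mem_reachableAvoiding_of_walk hWR p.reverse (by simpa using hp))

end Separators

theorem exists_optimal_minCost_separator_general (H : SimpleGraph V)
    (A Y : V) (c : V → ℝ≥0∞)
    (hsep : ∃ Z, IsSeparator H A Y Z) :
    ∃ O, IsMinCostSeparator H A Y c O ∧
      ∀ Z, IsMinCostSeparator H A Y c Z → SepOrder H A Y O Z := by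
  obtain ⟨Z₀, hZ₀⟩ := exists_isMinCostSeparator c hsep
  obtain ⟨S, hS, hleast⟩ := InfClosed.exists_isLeast (s := {S | IsTightSide H A Y c S})
    (fun _ hS _ hT => hS.inter hT) (Set.toFinite _) ⟨_, hZ₀.isTightSide_reachableAvoiding⟩
  exact ⟨H.vertexBoundary S, hS.2.2, fun Z hZ =>
    sepOrder_vertexBoundary hS.1 hZ.1 (hleast hZ.isTightSide_reachableAvoiding)⟩

/-- if `A` and `Y` are non-adjacent and some `A`–`Y` separator exists,
then there is a minimum cost separator `O` with `O ⊴ Z` for every minimum cost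
separator `Z`. -/
theorem exists_optimal_minCost_separator (H : SimpleGraph V)
    (A Y : V) (c : V → ℝ≥0∞) (hcpos : ∀ w, 0 < c w) (hcfin : ∀ w, c w ≠ ⊤)
    (hAdj : ¬ H.Adj A Y) (hsep : ∃ Z, IsSeparator H A Y Z) :
    ∃ O, IsMinCostSeparator H A Y c O ∧
      ∀ Z, IsMinCostSeparator H A Y c Z → SepOrder H A Y O Z :=
  exists_optimal_minCost_separator_general H A Y c hsep
end
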